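/- For each n ≥ 2 let a_n, b_n > 0 be bounded sequences with p_n = a_n·log(n)/n ∈ (0,1) and q_n = b_n·log(n)/n ∈ (0,1), let the prior on Θ_n be uniform, and let θ_n ∈ Θ_n. If ((√a_n − √b_n)² − a_n b_n log(n)/(2n) − 4)·log(n) → ∞ as n → ∞, then P_{θ_n} Π({θ_n} | X^n) → 1, i.e. the posterior recovers the community assignments exactly. -/

import Mathlib

open Finset Real Filter

/-- The set of potential edges of an `n`-vertex graph: pairs `(i,j)` with `i < j`. -/
abbrev Edge (n : ℕ) := {e : Fin n × Fin n // e.1 < e.2}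

/-- An observed graph: an edge indicator for each potential edge. -/
abbrev SBMGraph (n : ℕ) := Edge n → Bool

/-- Edge probability under assignment `θ`: `p` within communities, `q` between. -/
noncomputable def edgeProb {n : ℕ} (p q : ℝ) (θ : Fin n → Bool) (e : Edge n) : ℝ :=
  if θ e.val.1 = θ e.val.2 then p else q

/-- Probability mass function of the observed graph under `θ`. -/
noncomputable def graphPMF {n : ℕ} (p q : ℝ) (θ : Fin n → Bool) (x : SBMGraph n) : ℝ :=
  ∏ e : Edge n, if x e then edgeProb p q θ e else 1 - edgeProb p q θ e

/-- Hellinger affinity of Bernoulli parameters. -/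
noncomputable def rho (p q : ℝ) : ℝ := Real.sqrt (p * q) + Real.sqrt ((1 - p) * (1 - q))

/-- Edges whose probability changes from `p` to `q` when replacing `θ` by `η`. -/
def D1 {n : ℕ} (θ η : Fin n → Bool) : Finset (Fin n × Fin n) :=
  Finset.univ.filter fun e => e.1 < e.2 ∧ θ e.1 = θ e.2 ∧ η e.1 ≠ η e.2

/-- Edges whose probability changes from `q` to `p` when replacing `θ` by `η`. -/
def D2 {n : ℕ} (θ η : Fin n → Bool) : Finset (Fin n × Fin n) :=
  Finset.univ.filter fun e => e.1 < e.2 ∧ θ e.1 ≠ θ e.2 ∧ η e.1 = η e.2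

/-- Hamming distance. -/
def hdist {n : ℕ} (θ η : Fin n → Bool) : ℕ := (Finset.univ.filter fun i => θ i ≠ η i).card

/-- The metric `k(θ,η) = h(θ,η) ∧ (n - h(θ,η))`. -/
def kdist {n : ℕ} (θ η : Fin n → Bool) : ℕ := min (hdist θ η) (n - hdist θ η)

/-- Size of the smallest community. -/
def countOnes {n : ℕ} (θ : Fin n → Bool) : ℕ := (Finset.univ.filter fun i => θ i = true).card

/-- The parameter space `Θ_n`. -/
def Theta (n : ℕ) : Finset (Fin n → Bool) :=
  Finset.univ.filter fun θ => 2 * countOnes θ ≤ n ∧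
    ∀ i : Fin n, 2 * countOnes θ = n → (i : ℕ) = 0 → θ i = false

/-- Posterior mass of `A ⊆ Θ_n` given data `x`, under prior mass function `π`. -/
noncomputable def postMass {n : ℕ} (p q : ℝ) (pri : (Fin n → Bool) → ℝ)
    (A : Finset (Fin n → Bool)) (x : SBMGraph n) : ℝ :=
  (∑ η ∈ A, pri η * graphPMF p q η x) / (∑ η ∈ Theta n, pri η * graphPMF p q η x)

/-- `P_θ`-expectation of the posterior mass of `A`. -/
noncomputable def expPostMass {n : ℕ} (p q : ℝ) (pri : (Fin n → Bool) → ℝ)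
    (θ : Fin n → Bool) (A : Finset (Fin n → Bool)) : ℝ :=
  ∑ x : SBMGraph n, graphPMF p q θ x * postMass p q pri A x

/-- The uniform prior on `Θ_n`. -/
noncomputable def unifPrior (n : ℕ) : (Fin n → Bool) → ℝ := fun _ => ((2:ℝ) ^ (n - 1))⁻¹

/-- Hamming ball `B_n(θ,k)` inside `Θ_n`. -/
def hball {n : ℕ} (θ : Fin n → Bool) (k : ℕ) : Finset (Fin n → Bool) :=
  (Theta n).filter fun η => kdist η θ ≤ k

/-!
Under the uniform prior, `1 - E_θ Π({θ} | X) = E_θ Π(Θ_n ∖ {θ} | X)`, and each term of the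
latter is at most `∑_x √(p_θ(x) p_η(x))` because `ab/s ≤ √(ab)` when `a + b ≤ s`. This affinity
factorizes over edges into `ρ(p,q) ^ (h (n - h))`, `h` the Hamming distance of `θ` and `η`: exactly
`h (n - h)` edges switch between "within" and "between". The constraint `θ_1 = 0` for balanced
assignments excludes `h = n`, so grouping by `h ∈ [1, n)` and using `C(n,h) ≤ n ^ min(h, n-h)`
bounds the error by `4 ε` with `ε = n ρ ^ ⌈n/2⌉` once `ε ≤ 1/2`. Finally
`ρ ≤ 1 - (√p - √q)² / 2 ≤ exp (-(√a - √b)² log n / (2n))` gives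
`ε ≤ exp (-((√a - √b)² - 4) log n / 4)`, which tends to `0` under the hypothesis.
-/

theorem rho_le_one_sub_sq {p q : ℝ} (hp : p ∈ Set.Icc (0:ℝ) 1)
    (hq : q ∈ Set.Icc (0:ℝ) 1) : rho p q ≤ 1 - (√p - √q) ^ 2 / 2 := by
  have hAMGM : √((1 - p) * (1 - q)) ≤ ((1 - p) + (1 - q)) / 2 := by
    rw [Real.sqrt_le_left (by linarith [hp.2, hq.2])]
    nlinarith [sq_nonneg (p - q)]
  have hsq : (√p - √q) ^ 2 = p + q - 2 * √(p * q) := by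
    rw [sub_sq, Real.sq_sqrt hp.1, Real.sq_sqrt hq.1, Real.sqrt_mul hp.1]
    ring
  rw [rho, hsq]
  linarith

theorem rho_le_one {p q : ℝ} (hp : p ∈ Set.Icc (0:ℝ) 1) (hq : q ∈ Set.Icc (0:ℝ) 1) :
    rho p q ≤ 1 :=
  (rho_le_one_sub_sq hp hq).trans (by linarith [sq_nonneg (√p - √q)])

theorem rho_nonneg (p q : ℝ) : 0 ≤ rho p q := by
  unfold rho; positivity

theorem rho_self {r : ℝ} (hr : r ∈ Set.Icc (0:ℝ) 1) : rho r r = 1 := by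
  rw [rho, Real.sqrt_mul_self hr.1, Real.sqrt_mul_self (by linarith [hr.2])]
  ring

theorem rho_comm (p q : ℝ) : rho p q = rho q p := by
  rw [rho, rho, mul_comm p, mul_comm (1 - p)]

theorem rho_mul_le {a b c : ℝ} (hc : 0 ≤ c) (hp : a * c ∈ Set.Icc (0:ℝ) 1)
    (hq : b * c ∈ Set.Icc (0:ℝ) 1) : rho (a * c) (b * c) ≤ 1 - c * (√a - √b) ^ 2 / 2 := by
  convert rho_le_one_sub_sq hp hq using 2
  rw [Real.sqrt_mul' a hc, Real.sqrt_mul' b hc, ← sub_mul, mul_pow, Real.sq_sqrt hc]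
  ring

theorem mul_div_le_sqrt_mul {a b s : ℝ} (ha : 0 ≤ a) (hb : 0 ≤ b) (hs : a + b ≤ s) :
    a * b / s ≤ √(a * b) := by
  rcases (add_nonneg ha hb).eq_or_lt with hab | hab
  · obtain ⟨rfl, rfl⟩ : a = 0 ∧ b = 0 := ⟨by linarith, by linarith⟩
    simp
  have hsqrt : √(a * b) ≤ a + b := by
    rw [Real.sqrt_le_left hab.le]
    nlinarith [mul_nonneg ha hb]
  rw [div_le_iff₀ (hab.trans_le hs)]
  calc a * b = √(a * b) * √(a * b) := (Real.mul_self_sqrt (mul_nonneg ha hb)).symm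
    _ ≤ √(a * b) * s := by gcongr; exact hsqrt.trans hs

theorem Fintype.sum_prod_bool {ι R : Type*} [Fintype ι] [DecidableEq ι] [CommSemiring R]
    (F : ι → Bool → R) :
    ∑ x : ι → Bool, ∏ i, F i (x i) = ∏ i, (F i true + F i false) := by
  simp only [← Fintype.prod_sum, Fintype.sum_bool]

section GraphPMF

variable {n : ℕ} {p q : ℝ}

theorem edgeProb_mem {s : Set ℝ} (hp : p ∈ s) (hq : q ∈ s) (θ : Fin n → Bool) (e : Edge n) :
    edgeProb p q θ e ∈ s := by
  unfold edgeProb; split <;> assumption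

theorem graphPMF_pos (hp : p ∈ Set.Ioo (0:ℝ) 1) (hq : q ∈ Set.Ioo (0:ℝ) 1)
    (θ : Fin n → Bool) (x : SBMGraph n) : 0 < graphPMF p q θ x := by
  refine Finset.prod_pos fun e _ => ?_
  obtain ⟨h0, h1⟩ := edgeProb_mem hp hq θ e
  split <;> linarith

theorem graphPMF_nonneg (hp : p ∈ Set.Icc (0:ℝ) 1) (hq : q ∈ Set.Icc (0:ℝ) 1)
    (θ : Fin n → Bool) (x : SBMGraph n) : 0 ≤ graphPMF p q θ x := by
  refine Finset.prod_nonneg fun e _ => ?_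
  obtain ⟨h0, h1⟩ := edgeProb_mem hp hq θ e
  split <;> linarith

theorem sum_graphPMF (p q : ℝ) (θ : Fin n → Bool) :
    ∑ x : SBMGraph n, graphPMF p q θ x = 1 := by
  simp only [graphPMF]
  rw [Fintype.sum_prod_bool (fun e b => if b then edgeProb p q θ e else 1 - edgeProb p q θ e)]
  simp

def changedEdges (θ η : Fin n → Bool) : Finset (Edge n) :=
  univ.filter fun e => ¬(θ e.1.1 = θ e.1.2 ↔ η e.1.1 = η e.1.2)

theorem rho_edgeProb (hp : p ∈ Set.Icc (0:ℝ) 1) (hq : q ∈ Set.Icc (0:ℝ) 1)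
    (θ η : Fin n → Bool) (e : Edge n) :
    rho (edgeProb p q θ e) (edgeProb p q η e)
      = if e ∈ changedEdges θ η then rho p q else 1 := by
  unfold edgeProb changedEdges
  by_cases hθ : θ e.1.1 = θ e.1.2 <;> by_cases hη : η e.1.1 = η e.1.2 <;>
    simp [hθ, hη, rho_self hp, rho_self hq, rho_comm q p]

theorem sum_sqrt_graphPMF_mul (hp : p ∈ Set.Icc (0:ℝ) 1) (hq : q ∈ Set.Icc (0:ℝ) 1)
    (θ η : Fin n → Bool) :
    ∑ x : SBMGraph n, √(graphPMF p q θ x * graphPMF p q η x)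
      = rho p q ^ #(changedEdges θ η) := by
  have hP := edgeProb_mem (n := n) hp hq
  have hsplit : ∀ x : SBMGraph n, √(graphPMF p q θ x * graphPMF p q η x) =
      ∏ e, √((if x e then edgeProb p q θ e else 1 - edgeProb p q θ e) *
        (if x e then edgeProb p q η e else 1 - edgeProb p q η e)) := fun x => by
    rw [graphPMF, graphPMF, ← prod_mul_distrib, Real.sqrt_prod]
    intro e _
    obtain ⟨h0, h1⟩ := hP θ e
    obtain ⟨h0', h1'⟩ := hP η e
    split <;> nlinarith
  calc ∑ x : SBMGraph n, √(graphPMF p q θ x * graphPMF p q η x)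
      = ∏ e, rho (edgeProb p q θ e) (edgeProb p q η e) := by
        simp only [hsplit]
        exact Fintype.sum_prod_bool fun e b =>
          √((if b then edgeProb p q θ e else 1 - edgeProb p q θ e) *
            (if b then edgeProb p q η e else 1 - edgeProb p q η e))
    _ = rho p q ^ #(changedEdges θ η) := by
        simp only [rho_edgeProb hp hq, prod_ite_mem, univ_inter, prod_const]

end GraphPMF

theorem card_filter_lt_and_mem_iff_notMem {α : Type*} [LinearOrder α] [Fintype α]
    (S : Finset α) : #{e : α × α | e.1 < e.2 ∧ (e.1 ∈ S ↔ e.2 ∉ S)} = #S * #Sᶜ := by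
  rw [← card_product]
  refine card_nbij' (fun e => if e.1 ∈ S then e else e.swap)
    (fun e => if e.1 < e.2 then e else e.swap) ?_ ?_ ?_ ?_
  · rintro ⟨i, j⟩ h
    obtain ⟨hij, hS⟩ : i < j ∧ (i ∈ S ↔ j ∉ S) := by simpa using h
    by_cases hi : i ∈ S
    · simp [hi, hS.1 hi]
    · simp [hi, not_not.1 (mt hS.2 hi)]
  · rintro ⟨i, j⟩ h
    obtain ⟨hi, hj⟩ : i ∈ S ∧ j ∉ S := by simpa using h
    have hne : i ≠ j := by rintro rfl; exact hj hi
    rcases hne.lt_or_gt with hij | hij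
    · simp_all
    · simp_all [hij.not_gt]
  · rintro ⟨i, j⟩ h
    obtain ⟨hij, hS⟩ : i < j ∧ (i ∈ S ↔ j ∉ S) := by simpa using h
    by_cases hi : i ∈ S
    · simp [hi, hij]
    · simp [hi, hij.not_gt]
  · rintro ⟨i, j⟩ h
    obtain ⟨hi, hj⟩ : i ∈ S ∧ j ∉ S := by simpa using h
    have hne : i ≠ j := by rintro rfl; exact hj hi
    rcases hne.lt_or_gt with hij | hij
    · simp_all
    · simp_all [hij.not_gt]

theorem card_changedEdges {n : ℕ} (θ η : Fin n → Bool) :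
    #(changedEdges θ η) = hdist θ η * (n - hdist θ η) := by
  set S : Finset (Fin n) := univ.filter fun i => θ i ≠ η i
  have hflip : ∀ i j : Fin n, ¬(θ i = θ j ↔ η i = η j) ↔ (i ∈ S ↔ j ∉ S) := fun i j => by
    simp only [S, mem_filter, mem_univ, true_and]
    cases θ i <;> cases θ j <;> cases η i <;> cases η j <;> decide
  have hcompl : n - hdist θ η = #Sᶜ := by rw [card_compl, Fintype.card_fin]; rfl
  rw [hcompl, hdist, ← card_filter_lt_and_mem_iff_notMem S]
  refine card_bij (fun e _ => e.1) (fun e he => ?_) (fun _ _ _ _ => Subtype.ext)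
    (fun e he => ?_)
  · simp only [changedEdges, mem_filter, mem_univ, true_and, hflip] at he ⊢
    exact ⟨e.2, he⟩
  · simp only [mem_filter, mem_univ, true_and] at he
    exact ⟨⟨e, he.1⟩, by simpa [changedEdges, hflip] using he.2, rfl⟩

section Counting

variable {n : ℕ}

theorem hdist_pos {θ η : Fin n → Bool} (h : θ ≠ η) : 0 < hdist θ η := by
  obtain ⟨i, hi⟩ := Function.ne_iff.1 h
  exact card_pos.2 ⟨i, mem_filter.2 ⟨mem_univ i, hi⟩⟩

theorem countOnes_add_countOnes {θ η : Fin n → Bool} (h : ∀ i, θ i ≠ η i) :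
    countOnes θ + countOnes η = n := by
  have hη : countOnes η = #(univ.filter fun i => ¬θ i = true) := by
    rw [countOnes]
    congr 1
    exact filter_congr fun i _ => by
      have := h i
      revert this; cases θ i <;> cases η i <;> decide
  rw [hη, countOnes, card_filter_add_card_filter_not, card_univ, Fintype.card_fin]

theorem hdist_lt {θ η : Fin n → Bool} (hθ : θ ∈ Theta n) (hη : η ∈ Theta n)
    (hne : θ ≠ η) : hdist θ η < n := by
  have hn : 0 < n := (hdist_pos hne).trans_le ((card_filter_le _ _).trans (by simp))
  by_contra! hge
  have hall : ∀ i, θ i ≠ η i := by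
    have : #(univ.filter fun i => θ i ≠ η i) = #(univ : Finset (Fin n)) :=
      le_antisymm (card_filter_le _ _) (by simpa [hdist] using hge)
    simpa using card_filter_eq_iff.1 this
  -- `η = !θ` forces two communities of size `n/2`, where `Θ_n` pins `θ 0 = η 0 = false`.
  have hsum := countOnes_add_countOnes hall
  simp only [Theta, mem_filter, mem_univ, true_and] at hθ hη
  have hθ0 := hθ.2 ⟨0, hn⟩ (by omega) rfl
  have hη0 := hη.2 ⟨0, hn⟩ (by omega) rfl
  exact hall ⟨0, hn⟩ (hθ0.trans hη0.symm)

theorem card_filter_hdist_eq_le (θ : Fin n → Bool) (h : ℕ) :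
    #(univ.filter fun η => hdist θ η = h) ≤ n.choose h := by
  calc #(univ.filter fun η => hdist θ η = h)
      ≤ #(powersetCard h (univ : Finset (Fin n))) := by
        refine card_le_card_of_injOn (fun η => univ.filter fun i => θ i ≠ η i)
          (fun η hη => mem_powersetCard.2 ⟨subset_univ _, (mem_filter.1 hη).2⟩) ?_
        intro η₁ _ η₂ _ heq
        funext i
        have := congrArg (i ∈ ·) heq
        simp only [mem_filter, mem_univ, true_and, eq_iff_iff] at this
        revert this; cases θ i <;> cases η₁ i <;> cases η₂ i <;> decide
    _ = n.choose h := by simp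

theorem choose_mul_pow_le {r : ℝ} (hr0 : 0 ≤ r) (hr1 : r ≤ 1) {h : ℕ} (hh : h ≤ n) :
    n.choose h * r ^ (h * (n - h))
      ≤ (n * r ^ ((n + 1) / 2)) ^ h + (n * r ^ ((n + 1) / 2)) ^ (n - h) := by
  have key : ∀ k, n.choose h = n.choose k → k * ((n + 1) / 2) ≤ h * (n - h) →
      n.choose h * r ^ (h * (n - h)) ≤ (n * r ^ ((n + 1) / 2)) ^ k := fun k hk hexp => by
    rw [mul_pow, ← pow_mul', hk]
    exact mul_le_mul (by exact_mod_cast Nat.choose_le_pow n k)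
      (pow_le_pow_of_le_one hr0 hr1 hexp) (by positivity) (by positivity)
  rcases le_total h (n - h) with hle | hle
  · exact (key h rfl (Nat.mul_le_mul_left h (by omega))).trans
      (le_add_of_nonneg_right (by positivity))
  · refine (key (n - h) (Nat.choose_symm hh).symm ?_).trans
      (le_add_of_nonneg_left (by positivity))
    rw [mul_comm h]
    exact Nat.mul_le_mul_left _ (by omega)

theorem sum_Ico_pow_add_pow_sub_le {ε : ℝ} (hε0 : 0 ≤ ε) (hε : ε ≤ 1 / 2) (n : ℕ) :
    ∑ h ∈ Ico 1 n, (ε ^ h + ε ^ (n - h)) ≤ 4 * ε := by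
  have hreflect : ∑ h ∈ Ico 1 n, ε ^ (n - h) = ∑ h ∈ Ico 1 n, ε ^ h := by
    rw [sum_Ico_reflect _ _ (Nat.le_succ n)]
    simp
  have hgeom : ∑ h ∈ Ico 1 n, ε ^ h ≤ 2 * ε := by
    refine (geom_sum_Ico_le_of_lt_one hε0 (by linarith)).trans ?_
    rw [pow_one, div_le_iff₀ (by linarith)]
    nlinarith
  rw [sum_add_distrib, hreflect]
  linarith

theorem sum_erase_pow_hdist_le {r : ℝ} (hr0 : 0 ≤ r) (hr1 : r ≤ 1) {θ : Fin n → Bool}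
    (hθ : θ ∈ Theta n) (hε : n * r ^ ((n + 1) / 2) ≤ 1 / 2) :
    ∑ η ∈ (Theta n).erase θ, r ^ (hdist θ η * (n - hdist θ η))
      ≤ 4 * (n * r ^ ((n + 1) / 2)) := by
  have hmaps : ∀ η ∈ (Theta n).erase θ, hdist θ η ∈ Ico 1 n := fun η hη =>
    mem_Ico.2 ⟨hdist_pos (ne_of_mem_erase hη).symm,
      hdist_lt hθ (mem_of_mem_erase hη) (ne_of_mem_erase hη).symm⟩
  calc ∑ η ∈ (Theta n).erase θ, r ^ (hdist θ η * (n - hdist θ η))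
      = ∑ h ∈ Ico 1 n, ∑ η ∈ ((Theta n).erase θ).filter (fun η => hdist θ η = h),
          r ^ (h * (n - h)) := by
        rw [← sum_fiberwise_of_maps_to hmaps]
        exact sum_congr rfl fun h _ => sum_congr rfl fun η hη => by rw [(mem_filter.1 hη).2]
    _ ≤ ∑ h ∈ Ico 1 n, (n.choose h : ℝ) * r ^ (h * (n - h)) := by
        refine sum_le_sum fun h _ => ?_
        rw [sum_const, nsmul_eq_mul]
        gcongr
        exact_mod_cast (card_le_card (filter_subset_filter _ (subset_univ _))).trans
          (card_filter_hdist_eq_le θ h)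
    _ ≤ ∑ h ∈ Ico 1 n, ((n * r ^ ((n + 1) / 2)) ^ h + (n * r ^ ((n + 1) / 2)) ^ (n - h)) :=
        sum_le_sum fun h hh => choose_mul_pow_le hr0 hr1 (mem_Ico.1 hh).2.le
    _ ≤ 4 * (n * r ^ ((n + 1) / 2)) := sum_Ico_pow_add_pow_sub_le (by positivity) hε n

end Counting

section Posterior

variable {n : ℕ} {p q : ℝ}

theorem const_false_mem_Theta (n : ℕ) : (fun _ => false) ∈ Theta n := by
  rw [Theta, mem_filter]
  simp [countOnes]

theorem expPostMass_singleton_add_erase {pri : (Fin n → Bool) → ℝ} {θ : Fin n → Bool}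
    {A : Finset (Fin n → Bool)} (hθ : θ ∈ A) :
    expPostMass p q pri θ {θ} + expPostMass p q pri θ (A.erase θ)
      = expPostMass p q pri θ A := by
  simp only [expPostMass, postMass, ← sum_add_distrib, ← mul_add, ← add_div, sum_singleton]
  exact sum_congr rfl fun x _ => by
    rw [add_sum_erase A (fun η => pri η * graphPMF p q η x) hθ]

theorem expPostMass_Theta (hp : p ∈ Set.Ioo (0:ℝ) 1) (hq : q ∈ Set.Ioo (0:ℝ) 1)
    {pri : (Fin n → Bool) → ℝ} (hpri : ∀ η, 0 < pri η) (θ : Fin n → Bool) :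
    expPostMass p q pri θ (Theta n) = 1 := by
  have hZ : ∀ x, 0 < ∑ η ∈ Theta n, pri η * graphPMF p q η x := fun x =>
    sum_pos (fun η _ => mul_pos (hpri η) (graphPMF_pos hp hq η x))
      ⟨_, const_false_mem_Theta n⟩
  simp only [expPostMass, postMass, div_self (hZ _).ne', mul_one, sum_graphPMF]

theorem postMass_unifPrior (A : Finset (Fin n → Bool)) (x : SBMGraph n) :
    postMass p q (unifPrior n) A x
      = (∑ η ∈ A, graphPMF p q η x) / ∑ η ∈ Theta n, graphPMF p q η x := by
  simp only [postMass, unifPrior, ← mul_sum]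
  exact mul_div_mul_left _ _ (by positivity)

theorem expPostMass_erase_le (hp : p ∈ Set.Icc (0:ℝ) 1) (hq : q ∈ Set.Icc (0:ℝ) 1)
    {θ : Fin n → Bool} (hθ : θ ∈ Theta n) :
    expPostMass p q (unifPrior n) θ ((Theta n).erase θ)
      ≤ ∑ η ∈ (Theta n).erase θ, rho p q ^ (hdist θ η * (n - hdist θ η)) := by
  set P := graphPMF p q
  have hpair : ∀ η ∈ (Theta n).erase θ, ∀ x, P θ x + P η x ≤ ∑ ζ ∈ Theta n, P ζ x := by
    intro η hη x
    rw [← sum_pair (f := fun ζ => P ζ x) (Ne.symm (ne_of_mem_erase hη))]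
    refine sum_le_sum_of_subset_of_nonneg (insert_subset hθ ?_)
      fun ζ _ _ => graphPMF_nonneg hp hq ζ x
    exact singleton_subset_iff.2 (mem_of_mem_erase hη)
  calc expPostMass p q (unifPrior n) θ ((Theta n).erase θ)
      = ∑ η ∈ (Theta n).erase θ, ∑ x, P θ x * P η x / ∑ ζ ∈ Theta n, P ζ x := by
        simp only [expPostMass, postMass_unifPrior, mul_sum, sum_div, mul_div_assoc]
        exact sum_comm
    _ ≤ ∑ η ∈ (Theta n).erase θ, ∑ x, √(P θ x * P η x) :=
        sum_le_sum fun η hη => sum_le_sum fun x _ => mul_div_le_sqrt_mul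
          (graphPMF_nonneg hp hq θ x) (graphPMF_nonneg hp hq η x) (hpair η hη x)
    _ = ∑ η ∈ (Theta n).erase θ, rho p q ^ (hdist θ η * (n - hdist θ η)) := by
        simp only [P, sum_sqrt_graphPMF_mul hp hq, card_changedEdges]

theorem unifPrior_pos (n : ℕ) (η : Fin n → Bool) : 0 < unifPrior n η :=
  inv_pos.2 (pow_pos two_pos _)

theorem expPostMass_nonneg (hp : p ∈ Set.Icc (0:ℝ) 1) (hq : q ∈ Set.Icc (0:ℝ) 1)
    {pri : (Fin n → Bool) → ℝ} (hpri : ∀ η, 0 ≤ pri η) (θ : Fin n → Bool)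
    (A : Finset (Fin n → Bool)) : 0 ≤ expPostMass p q pri θ A := by
  have hP := graphPMF_nonneg (n := n) hp hq
  exact sum_nonneg fun x _ => mul_nonneg (hP θ x) (div_nonneg
    (sum_nonneg fun η _ => mul_nonneg (hpri η) (hP η x))
    (sum_nonneg fun η _ => mul_nonneg (hpri η) (hP η x)))

theorem expPostMass_singleton_mem_Icc (hp : p ∈ Set.Ioo (0:ℝ) 1)
    (hq : q ∈ Set.Ioo (0:ℝ) 1) {θ : Fin n → Bool} (hθ : θ ∈ Theta n)
    (hε : n * rho p q ^ ((n + 1) / 2) ≤ 1 / 2) :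
    expPostMass p q (unifPrior n) θ {θ}
      ∈ Set.Icc (1 - 4 * (n * rho p q ^ ((n + 1) / 2))) 1 := by
  have hp' := Set.Ioo_subset_Icc_self hp
  have hq' := Set.Ioo_subset_Icc_self hq
  have hsplit := expPostMass_singleton_add_erase (p := p) (q := q) (pri := unifPrior n) hθ
  rw [expPostMass_Theta hp hq (unifPrior_pos n)] at hsplit
  have herror := (expPostMass_erase_le hp' hq' hθ).trans
    (sum_erase_pow_hdist_le (rho_nonneg p q) (rho_le_one hp' hq') hθ hε)
  have hnonneg := expPostMass_nonneg hp' hq' (fun η => (unifPrior_pos n η).le) θ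
    ((Theta n).erase θ)
  constructor <;> linarith

end Posterior

theorem natCast_mul_rho_pow_le_exp {n : ℕ} (hn : 0 < n) {a b : ℝ}
    (hp : a * log n / n ∈ Set.Icc (0:ℝ) 1) (hq : b * log n / n ∈ Set.Icc (0:ℝ) 1) :
    n * rho (a * log n / n) (b * log n / n) ^ ((n + 1) / 2)
      ≤ exp (-(((√a - √b) ^ 2 - 4) * log n / 4)) := by
  set c := log n / n
  set G := (√a - √b) ^ 2
  have hn' : (0:ℝ) < n := by exact_mod_cast hn
  have hc : 0 ≤ c := div_nonneg (Real.log_natCast_nonneg n) hn'.le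
  have hcG : 0 ≤ c * G := mul_nonneg hc (sq_nonneg _)
  have hK : (n:ℝ) ≤ 2 * ((n + 1) / 2 : ℕ) := by
    exact_mod_cast (by omega : n ≤ 2 * ((n + 1) / 2))
  rw [mul_div_assoc] at hp hq
  rw [mul_div_assoc a, mul_div_assoc b]
  have hrho : rho (a * c) (b * c) ≤ exp (-(c * G / 2)) :=
    (rho_mul_le hc hp hq).trans (by linarith [add_one_le_exp (-(c * G / 2))])
  calc n * rho (a * c) (b * c) ^ ((n + 1) / 2)
      ≤ n * exp (-(c * G / 2)) ^ ((n + 1) / 2) := by gcongr; exact rho_nonneg _ _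
    _ = exp (log n - ((n + 1) / 2 : ℕ) * (c * G / 2)) := by
        rw [sub_eq_add_neg, exp_add, exp_log hn', ← exp_nat_mul, mul_neg]
    _ ≤ exp (-((G - 4) * log n / 4)) := by
        refine exp_le_exp.2 ?_
        rw [← mul_div_cancel₀ (log n) hn'.ne']
        linarith [mul_nonneg (sub_nonneg.2 hK) hcG]

theorem pos_of_mul_log_div_pos {a : ℝ} {n : ℕ} (hn : 2 ≤ n) (h : 0 < a * log n / n) :
    0 < a := by
  have hlog : 0 < log n / n :=
    div_pos (Real.log_pos (by exact_mod_cast hn)) (by positivity)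
  rw [mul_div_assoc] at h
  exact (mul_pos_iff_of_pos_right hlog).1 h

theorem stmt9_general (a b : ℕ → ℝ)
    (hp : ∀ n, 2 ≤ n → a n * Real.log n / n ∈ Set.Ioo (0:ℝ) 1)
    (hq : ∀ n, 2 ≤ n → b n * Real.log n / n ∈ Set.Ioo (0:ℝ) 1)
    (θ : (n : ℕ) → Fin n → Bool) (hθ : ∀ n, 2 ≤ n → θ n ∈ Theta n)
    (hcond : Filter.Tendsto
      (fun n : ℕ => ((Real.sqrt (a n) - Real.sqrt (b n))^2
        - a n * b n * Real.log n / (2 * n) - 4) * Real.log n)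
      Filter.atTop Filter.atTop) :
    Filter.Tendsto (fun n : ℕ =>
        expPostMass (a n * Real.log n / n) (b n * Real.log n / n)
          (unifPrior n) (θ n) {θ n})
      Filter.atTop (nhds 1) := by
  set ε : ℕ → ℝ := fun n => n * rho (a n * log n / n) (b n * log n / n) ^ ((n + 1) / 2)
  have hrate :
      Tendsto (fun n : ℕ => ((√(a n) - √(b n)) ^ 2 - 4) * log n / 4) atTop atTop := by
    refine tendsto_atTop_mono' atTop ?_ (hcond.atTop_div_const four_pos)
    filter_upwards [eventually_ge_atTop 2] with n hn
    have ha := pos_of_mul_log_div_pos hn (hp n hn).1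
    have hb := pos_of_mul_log_div_pos hn (hq n hn).1
    have hlog : 0 ≤ log n := Real.log_natCast_nonneg n
    have : 0 ≤ a n * b n * log n / (2 * n) * log n := by positivity
    linarith
  have hε : Tendsto ε atTop (nhds 0) := by
    refine squeeze_zero' (Eventually.of_forall fun n =>
      mul_nonneg n.cast_nonneg (pow_nonneg (rho_nonneg _ _) _)) ?_
      (tendsto_exp_neg_atTop_nhds_zero.comp hrate)
    filter_upwards [eventually_ge_atTop 2] with n hn
    exact natCast_mul_rho_pow_le_exp (by omega) (Set.Ioo_subset_Icc_self (hp n hn))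
      (Set.Ioo_subset_Icc_self (hq n hn))
  have hbounds : ∀ᶠ n in atTop, expPostMass (a n * log n / n) (b n * log n / n) (unifPrior n)
      (θ n) {θ n} ∈ Set.Icc (1 - 4 * ε n) 1 := by
    filter_upwards [eventually_ge_atTop 2, hε.eventually (ge_mem_nhds one_half_pos)]
      with n hn hεn
    exact expPostMass_singleton_mem_Icc (hp n hn) (hq n hn) (hθ n hn) hεn
  refine tendsto_of_tendsto_of_tendsto_of_le_of_le' ?_ tendsto_const_nhds
    (hbounds.mono fun _ h => h.1) (hbounds.mono fun _ h => h.2)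
  simpa using (hε.const_mul 4).const_sub 1

/-- in the Chernoff–Hellinger phase, if
`((√a_n − √b_n)² − a_n b_n log n/(2n) − 4) log n → ∞` then the posterior recovers
the community assignments exactly. -/
theorem stmt9 (a b : ℕ → ℝ) (ha0 : ∀ n, 2 ≤ n → 0 < a n) (hb0 : ∀ n, 2 ≤ n → 0 < b n)
    (haB : ∃ C : ℝ, ∀ n, a n ≤ C) (hbB : ∃ C : ℝ, ∀ n, b n ≤ C)
    (hp : ∀ n, 2 ≤ n → a n * Real.log n / n ∈ Set.Ioo (0:ℝ) 1)
    (hq : ∀ n, 2 ≤ n → b n * Real.log n / n ∈ Set.Ioo (0:ℝ) 1)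
    (θ : (n : ℕ) → Fin n → Bool) (hθ : ∀ n, 2 ≤ n → θ n ∈ Theta n)
    (hcond : Filter.Tendsto
      (fun n : ℕ => ((Real.sqrt (a n) - Real.sqrt (b n))^2
        - a n * b n * Real.log n / (2 * n) - 4) * Real.log n)
      Filter.atTop Filter.atTop) :
    Filter.Tendsto (fun n : ℕ =>
        expPostMass (a n * Real.log n / n) (b n * Real.log n / n)
          (unifPrior n) (θ n) {θ n})
      Filter.atTop (nhds 1) :=
  stmt9_general a b hp hq θ hθ hcond
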